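/- Let C be a unilateral updown category and p, q objects with |q| - |p| = n > 0. Then u(p;q) = d(p;q) equals the number of chains (h₁, …, h_n) of morphisms between adjacent ranks such that the composite h_n ∘ h_{n-1} ∘ ⋯ ∘ h₁ is a morphism from p to q. -/
import Mathlib


/-! Core definitions: updown categories (Hoffman, "Updown categories"). -/

/-- The underlying data of a (small) category equipped with an ℕ-valued rank,
finite levels (given as `Finset`s) and a distinguished rank-0 object `zero`. -/
structure UpdownData where
  Obj : Type
  Hom : Obj → Obj → Type
  id : ∀ p : Obj, Hom p p
  comp : ∀ {p q r : Obj}, Hom p q → Hom q r → Hom p r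
  id_comp : ∀ {p q : Obj} (f : Hom p q), comp (id p) f = f
  comp_id : ∀ {p q : Obj} (f : Hom p q), comp f (id q) = f
  assoc : ∀ {p q r s : Obj} (f : Hom p q) (g : Hom q r) (h : Hom r s),
    comp (comp f g) h = comp f (comp g h)
  rank : Obj → ℕ
  level : ℕ → Finset Obj
  zero : Obj

namespace UpdownData

/-- Axioms A1–A5 of an updown category. -/
structure IsUpdownCat (C : UpdownData) : Prop where
  /-- `level n` is exactly the (finite) set of objects of rank `n` (A1). -/
  mem_level : ∀ (n : ℕ) (p : C.Obj), p ∈ C.level n ↔ C.rank p = n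
  /-- A2: `zero` is the unique rank-0 object. -/
  rank_zero : C.rank C.zero = 0
  zero_unique : ∀ p : C.Obj, C.rank p = 0 → p = C.zero
  /-- A2: there is a morphism from `zero` to every object. -/
  zero_init : ∀ p : C.Obj, Nonempty (C.Hom C.zero p)
  /-- A3: hom-sets are finite. -/
  homFinite : ∀ p q : C.Obj, Finite (C.Hom p q)
  /-- A3: `Hom p q` is empty unless `rank p < rank q` or `p = q`. -/
  hom_rank : ∀ p q : C.Obj, C.Hom p q → (C.rank p < C.rank q ∨ p = q)
  /-- A3: every endomorphism is invertible, so `Hom p p = Aut p` is a group. -/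
  aut_group : ∀ (p : C.Obj) (f : C.Hom p p),
    ∃ g : C.Hom p p, C.comp f g = C.id p ∧ C.comp g f = C.id p
  /-- A4: every morphism raising rank by more than one factors through the
  next level (hence, inductively, through all intermediate levels). -/
  factor : ∀ (p q : C.Obj) (f : C.Hom p q), C.rank p + 1 < C.rank q →
    ∃ (r : C.Obj) (g : C.Hom p r) (h : C.Hom r q),
      C.rank r = C.rank p + 1 ∧ C.comp g h = f
  /-- A5: `Aut p` acts freely on `Hom p q` by precomposition when
  `rank q = rank p + 1`. -/
  free_pre : ∀ (p q : C.Obj), C.rank q = C.rank p + 1 →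
    ∀ (α : C.Hom p p) (f : C.Hom p q), C.comp α f = f → α = C.id p
  /-- A5: `Aut q` acts freely on `Hom p q` by postcomposition when
  `rank q = rank p + 1`. -/
  free_post : ∀ (p q : C.Obj), C.rank q = C.rank p + 1 →
    ∀ (β : C.Hom q q) (f : C.Hom p q), C.comp f β = f → β = C.id q

/-- An updown category is unilateral if all automorphism groups are trivial. -/
def Unilateral (C : UpdownData) : Prop :=
  ∀ (p : C.Obj) (f : C.Hom p p), f = C.id p

/-- An updown category is simple if there is at most one morphism between any
two objects and morphisms factor uniquely into rank-1 steps (so the object at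
each intermediate rank in a factorization is unique). -/
def SimpleUD (C : UpdownData) : Prop :=
  (∀ p q : C.Obj, Subsingleton (C.Hom p q)) ∧
  (∀ (p q : C.Obj) (f : C.Hom p q) (k : ℕ), C.rank p < k → k < C.rank q →
    ∃! r : C.Obj, C.rank r = k ∧
      ∃ (g : C.Hom p r) (h : C.Hom r q), C.comp g h = f)

end UpdownData

/-! Up and down operators on the free vector space `Obj →₀ ℚ`. -/

namespace UpdownData

variable (C : UpdownData)

/-- `u(p;p') = |Hom(p,p')|/|Aut(p')|` (as a rational number). -/
noncomputable def uQ (p q : C.Obj) : ℚ :=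
  (Nat.card (C.Hom p q) : ℚ) / (Nat.card (C.Hom q q) : ℚ)

/-- `d(p;p') = |Hom(p,p')|/|Aut(p)|` (as a rational number). -/
noncomputable def dQ (p q : C.Obj) : ℚ :=
  (Nat.card (C.Hom p q) : ℚ) / (Nat.card (C.Hom p p) : ℚ)

/-- The free `ℚ`-vector space on the objects of `C`. -/
abbrev Vec := C.Obj →₀ ℚ

/-- `U(p) = Σ_{|p'| = |p|+1} u(p;p')·p'`. -/
noncomputable def Uvec (p : C.Obj) : C.Vec :=
  ∑ q ∈ C.level (C.rank p + 1), C.uQ p q • Finsupp.single q 1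

/-- `D(p) = Σ_{|p''| = |p|-1} d(p'';p)·p''`, and `D(0̂) = 0`. -/
noncomputable def Dvec (p : C.Obj) : C.Vec :=
  if C.rank p = 0 then 0
  else ∑ q ∈ C.level (C.rank p - 1), C.dQ q p • Finsupp.single q 1

/-- The up operator. -/
noncomputable def Uop : C.Vec →ₗ[ℚ] C.Vec :=
  Finsupp.lsum ℚ fun p => LinearMap.toSpanSingleton ℚ C.Vec (C.Uvec p)

/-- The down operator. -/
noncomputable def Dop : C.Vec →ₗ[ℚ] C.Vec :=
  Finsupp.lsum ℚ fun p => LinearMap.toSpanSingleton ℚ C.Vec (C.Dvec p)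

/-- The inner product with `⟨p,p⟩ = |Aut(p)|` on basis elements. -/
noncomputable def innerUD (x y : C.Vec) : ℚ :=
  x.sum fun p c => c * y p * (Nat.card (C.Hom p p) : ℚ)

/-- The commutator `DU - UD`. -/
noncomputable def commDU : C.Vec →ₗ[ℚ] C.Vec :=
  C.Dop ∘ₗ C.Uop - C.Uop ∘ₗ C.Dop

/-- Extended multiplicity `u(p;q)`: the coefficient of `q` in
`U^{|q|-|p|}(p)`, i.e. `⟨U^{|q|-|p|}(p), q⟩ / |Aut q|`. -/
noncomputable def uext (p q : C.Obj) : ℚ :=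
  ((C.Uop ^ (C.rank q - C.rank p)) (Finsupp.single p 1)) q

/-- Extended multiplicity `d(p;q)`: the coefficient of `p` in
`D^{|q|-|p|}(q)`. -/
noncomputable def dext (p q : C.Obj) : ℚ :=
  ((C.Dop ^ (C.rank q - C.rank p)) (Finsupp.single q 1)) p

/-- The weak commutation condition with eigenvalue function `ε`:
every object is an eigenvector of `DU - UD`. -/
def WCC (ε : C.Obj → ℚ) : Prop :=
  ∀ p : C.Obj, C.commDU (Finsupp.single p 1) = ε p • Finsupp.single p 1

/-- The sequential commutation condition: `DU - UD` acts as the scalar `r i`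
on rank `i`. -/
def SCC (r : ℕ → ℚ) : Prop :=
  ∀ p : C.Obj, C.commDU (Finsupp.single p 1) = r (C.rank p) • Finsupp.single p 1

end UpdownData

namespace UpdownData

/-- A chain `(f₁,…,f_n)` of morphisms between consecutive ranks starting
at the object `p`. -/
structure UDChainFrom (C : UpdownData) (p : C.Obj) (n : ℕ) where
  obj : Fin (n + 1) → C.Obj
  mor : (i : Fin n) → C.Hom (obj i.castSucc) (obj i.succ)
  obj_base : obj 0 = p
  rank_obj : ∀ i : Fin (n + 1), C.rank (obj i) = C.rank p + i.val

end UpdownData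

/-! ### Auxiliary material for the chain-counting theorem -/

namespace UpdownData

variable {C : UpdownData}

open scoped Classical

/-- Transport a morphism along equalities of its endpoints. -/
def homCast {a a' b b' : C.Obj} (h1 : a = a') (h2 : b = b') (f : C.Hom a b) :
    C.Hom a' b' := h1 ▸ h2 ▸ f

theorem homCast_heq {a a' b b' : C.Obj} (h1 : a = a') (h2 : b = b')
    (f : C.Hom a b) : HEq (homCast h1 h2 f) f := by
  subst h1; subst h2; rfl

theorem UDChainFrom.ext' {p : C.Obj} {n : ℕ} {a b : UDChainFrom C p n}
    (h : a.obj = b.obj) (h2 : ∀ i, HEq (a.mor i) (b.mor i)) : a = b := by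
  obtain ⟨o, m, hb, hk⟩ := a
  obtain ⟨o', m', hb', hk'⟩ := b
  dsimp at h h2
  subst h
  have hm : m = m' := funext fun i => eq_of_heq (h2 i)
  subst hm
  rfl

theorem UDChainFrom.rank_one {p : C.Obj} {n : ℕ} (ch : UDChainFrom C p (n + 1)) :
    C.rank (ch.obj 1) = C.rank p + 1 := by
  have := ch.rank_obj 1
  rwa [Fin.val_one] at this

/-- The tail of a chain of positive length. -/
def UDChainFrom.tail {p : C.Obj} {n : ℕ} (ch : UDChainFrom C p (n + 1)) :
    UDChainFrom C (ch.obj 1) n where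
  obj := fun i => ch.obj i.succ
  mor := fun i =>
    homCast (congrArg ch.obj (Fin.succ_castSucc i)) rfl (ch.mor i.succ)
  obj_base := congrArg ch.obj Fin.succ_zero_eq_one
  rank_obj := fun i => by
    rw [ch.rank_obj i.succ, ch.rank_one, Fin.val_succ]
    omega

theorem UDChainFrom.tail_mor_heq {p : C.Obj} {n : ℕ}
    (ch : UDChainFrom C p (n + 1)) (i : Fin n) :
    HEq (ch.tail.mor i) (ch.mor i.succ) := by
  simp only [UDChainFrom.tail]
  exact homCast_heq _ _ _

/-- `Fin.cons` specialised to constant families, to ease elaboration. -/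
def consObj (p : C.Obj) {n : ℕ} (g : Fin (n + 1) → C.Obj) :
    Fin (n + 2) → C.Obj :=
  fun i => Fin.cases (motive := fun _ => C.Obj) p g i

theorem consObj_zero (p : C.Obj) {n : ℕ} (g : Fin (n + 1) → C.Obj) :
    consObj p g 0 = p := Fin.cases_zero

theorem consObj_succ (p : C.Obj) {n : ℕ} (g : Fin (n + 1) → C.Obj)
    (i : Fin (n + 1)) : consObj p g i.succ = g i := Fin.cases_succ i

theorem consObj_castSucc_zero (p : C.Obj) {n : ℕ} (g : Fin (n + 1) → C.Obj) :
    consObj p g (Fin.castSucc (0 : Fin (n + 1))) = p := by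
  rw [Fin.castSucc_zero]; exact consObj_zero p g

theorem consObj_castSucc_succ (p : C.Obj) {n : ℕ} (g : Fin (n + 1) → C.Obj)
    (j : Fin n) : consObj p g (Fin.castSucc j.succ) = g j.castSucc := by
  rw [← Fin.succ_castSucc]; exact consObj_succ p g j.castSucc

/-- Prepending a morphism to a chain. -/
def prepend {p r : C.Obj} {n : ℕ} (hr : C.rank r = C.rank p + 1)
    (f : C.Hom p r) (ch : UDChainFrom C r n) : UDChainFrom C p (n + 1) where
  obj := consObj p ch.obj
  mor := fun i => Fin.cases
    (motive := fun i : Fin (n + 1) =>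
      C.Hom (consObj p ch.obj i.castSucc) (consObj p ch.obj i.succ))
    (homCast (consObj_castSucc_zero p ch.obj).symm
      ((consObj_succ p ch.obj 0).trans ch.obj_base).symm f)
    (fun j => homCast (consObj_castSucc_succ p ch.obj j).symm
      (consObj_succ p ch.obj j.succ).symm (ch.mor j)) i
  obj_base := consObj_zero _ _
  rank_obj := fun i => by
    induction i using Fin.cases with
    | zero => rw [consObj_zero]; simp
    | succ j => rw [consObj_succ, ch.rank_obj j, hr, Fin.val_succ]; omega

theorem prepend_obj_zero {p r : C.Obj} {n : ℕ} (hr : C.rank r = C.rank p + 1)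
    (f : C.Hom p r) (ch : UDChainFrom C r n) :
    (prepend hr f ch).obj 0 = p :=
  show consObj p ch.obj 0 = p from consObj_zero p ch.obj

theorem prepend_obj_succ {p r : C.Obj} {n : ℕ} (hr : C.rank r = C.rank p + 1)
    (f : C.Hom p r) (ch : UDChainFrom C r n) (i : Fin (n + 1)) :
    (prepend hr f ch).obj i.succ = ch.obj i :=
  show consObj p ch.obj i.succ = ch.obj i from consObj_succ p ch.obj i

theorem prepend_obj_last {p r : C.Obj} {n : ℕ} (hr : C.rank r = C.rank p + 1)
    (f : C.Hom p r) (ch : UDChainFrom C r n) :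
    (prepend hr f ch).obj (Fin.last (n + 1)) = ch.obj (Fin.last n) := by
  rw [← Fin.succ_last]
  exact prepend_obj_succ hr f ch _

theorem prepend_mor_zero {p r : C.Obj} {n : ℕ} (hr : C.rank r = C.rank p + 1)
    (f : C.Hom p r) (ch : UDChainFrom C r n) :
    HEq ((prepend hr f ch).mor 0) f := by
  simp only [prepend, Fin.cases_zero]
  exact homCast_heq _ _ _

theorem prepend_mor_succ {p r : C.Obj} {n : ℕ} (hr : C.rank r = C.rank p + 1)
    (f : C.Hom p r) (ch : UDChainFrom C r n) (j : Fin n) :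
    HEq ((prepend hr f ch).mor j.succ) (ch.mor j) := by
  simp only [prepend, Fin.cases_succ]
  exact homCast_heq _ _ _

variable (C) in
/-- The type of chains from `p` of length `n` ending at `q`. -/
abbrev ChainsTo (p q : C.Obj) (n : ℕ) : Type :=
  {ch : UDChainFrom C p n // ch.obj (Fin.last n) = q}

/-- Prepending, as a map into the set of chains ending at `q`. -/
def prependFull (hC : C.IsUpdownCat) (p q : C.Obj) (n : ℕ)
    (x : Σ r : {x // x ∈ C.level (C.rank p + 1)},
      C.Hom p r.1 × ChainsTo C r.1 q n) : ChainsTo C p q (n + 1) :=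
  ⟨prepend ((hC.mem_level _ _).1 x.1.2) x.2.1 x.2.2.1, by
    rw [prepend_obj_last]
    exact x.2.2.2⟩

theorem prependFull_injective (hC : C.IsUpdownCat) (p q : C.Obj) (n : ℕ) :
    Function.Injective (prependFull (C := C) hC p q n) := by
  rintro ⟨⟨r, hrm⟩, f, ⟨⟨o, m, hb, hk⟩, hq⟩⟩ ⟨⟨r', hrm'⟩, f', ⟨⟨o', m', hb', hk'⟩, hq'⟩⟩ h
  simp only [prependFull] at h
  rw [Subtype.mk.injEq] at h
  have hobj := congrArg UDChainFrom.obj h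
  have ho : o = o' := funext fun i => by
    have h2 := congrFun hobj i.succ
    rwa [prepend_obj_succ, prepend_obj_succ] at h2
  subst ho
  have hrr : r = r' := hb.symm.trans hb'
  subst hrr
  have hmor : HEq (prepend ((hC.mem_level _ _).1 hrm) f
        (⟨o, m, hb, hk⟩ : UDChainFrom C _ n)).mor
      (prepend ((hC.mem_level _ _).1 hrm') f'
        (⟨o, m', hb', hk'⟩ : UDChainFrom C _ n)).mor := by
    rw [h]
  have hmor' := eq_of_heq hmor
  have hf : f = f' := eq_of_heq
    (((prepend_mor_zero _ f ⟨o, m, hb, hk⟩).symm.trans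
      (heq_of_eq (congrFun hmor' 0))).trans
      (prepend_mor_zero _ f' ⟨o, m', hb', hk'⟩))
  subst hf
  have hm : m = m' := funext fun j => eq_of_heq
    (((prepend_mor_succ _ f ⟨o, m, hb, hk⟩ j).symm.trans
      (heq_of_eq (congrFun hmor' j.succ))).trans
      (prepend_mor_succ _ f ⟨o, m', hb', hk'⟩ j))
  subst hm
  rfl

theorem prependFull_surjective (hC : C.IsUpdownCat) (p q : C.Obj) (n : ℕ) :
    Function.Surjective (prependFull (C := C) hC p q n) := by
  rintro ⟨ch, hq⟩
  have hrm : ch.obj 1 ∈ C.level (C.rank p + 1) := (hC.mem_level _ _).2 ch.rank_one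
  have h1 : ch.obj (Fin.castSucc (0 : Fin (n + 1))) = p := by
    rw [Fin.castSucc_zero, ch.obj_base]
  have h2 : ch.obj (Fin.succ (0 : Fin (n + 1))) = ch.obj 1 :=
    congrArg ch.obj Fin.succ_zero_eq_one
  have hq' : ch.tail.obj (Fin.last n) = q := by
    show ch.obj (Fin.last n).succ = q
    rw [Fin.succ_last]; exact hq
  refine ⟨⟨⟨ch.obj 1, hrm⟩, homCast h1 h2 (ch.mor 0), ⟨ch.tail, hq'⟩⟩, ?_⟩
  refine Subtype.ext (UDChainFrom.ext' ?_ ?_)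
  · funext i
    induction i using Fin.cases with
    | zero =>
      show (prepend ch.rank_one (homCast h1 h2 (ch.mor 0)) ch.tail).obj 0 = ch.obj 0
      rw [prepend_obj_zero, ch.obj_base]
    | succ j =>
      show (prepend ch.rank_one (homCast h1 h2 (ch.mor 0)) ch.tail).obj j.succ
        = ch.obj j.succ
      rw [prepend_obj_succ]
      rfl
  · intro i
    induction i using Fin.cases with
    | zero =>
      show HEq ((prepend ch.rank_one (homCast h1 h2 (ch.mor 0)) ch.tail).mor 0)
        (ch.mor 0)
      exact (prepend_mor_zero _ _ _).trans (homCast_heq _ _ _)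
    | succ j =>
      show HEq ((prepend ch.rank_one (homCast h1 h2 (ch.mor 0)) ch.tail).mor j.succ)
        (ch.mor j.succ)
      exact (prepend_mor_succ _ _ _ _).trans (ch.tail_mor_heq j)

theorem chainsTo_finite (hC : C.IsUpdownCat) :
    ∀ (n : ℕ) (p q : C.Obj), Finite (ChainsTo C p q n)
  | 0, p, q => by
    haveI : Subsingleton (UDChainFrom C p 0) :=
      ⟨fun a b => UDChainFrom.ext'
        (funext fun i => by
          rw [show i = 0 from Fin.ext (by simp [Nat.lt_one_iff.mp i.isLt]),
            a.obj_base, b.obj_base])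
        (fun i => i.elim0)⟩
    exact Finite.of_subsingleton
  | n + 1, p, q => by
    haveI : ∀ r : {x // x ∈ C.level (C.rank p + 1)},
        Finite (C.Hom p r.1 × ChainsTo C r.1 q n) := fun r => by
      haveI := hC.homFinite p r.1
      haveI := chainsTo_finite hC n r.1 q
      infer_instance
    exact Finite.of_surjective _ (prependFull_surjective hC p q n)

theorem natCard_sigma {ι : Type} [Fintype ι] (f : ι → Type) [∀ i, Finite (f i)] :
    Nat.card (Sigma f) = ∑ i, Nat.card (f i) := by
  haveI := fun i => Fintype.ofFinite (f i)
  simp [Nat.card_eq_fintype_card, Fintype.card_sigma]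

theorem card_chains_zero (p q : C.Obj) :
    Nat.card (ChainsTo C p q 0) = if p = q then 1 else 0 := by
  split_ifs with h
  · subst h
    rw [Nat.card_eq_one_iff_unique]
    haveI : Subsingleton (UDChainFrom C p 0) :=
      ⟨fun a b => UDChainFrom.ext'
        (funext fun i => by
          rw [show i = 0 from Fin.ext (by simp [Nat.lt_one_iff.mp i.isLt]),
            a.obj_base, b.obj_base])
        (fun i => i.elim0)⟩
    exact ⟨inferInstance, ⟨⟨⟨fun _ => p, fun i => i.elim0, rfl,
      fun i => by have h0 : (i : ℕ) = 0 := Nat.lt_one_iff.mp i.isLt; simp [h0]⟩,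
      rfl⟩⟩⟩
  · haveI : IsEmpty (ChainsTo C p q 0) := ⟨fun x => h
      ((x.1.obj_base.symm).trans
        ((congrArg x.1.obj (show (0 : Fin (0 + 1)) = Fin.last 0 from
          Fin.ext (by simp))).trans x.2))⟩
    exact Nat.card_of_isEmpty

theorem card_chains_succ (hC : C.IsUpdownCat) (p q : C.Obj) (n : ℕ) :
    Nat.card (ChainsTo C p q (n + 1)) =
      ∑ r ∈ C.level (C.rank p + 1),
        Nat.card (C.Hom p r) * Nat.card (ChainsTo C r q n) := by
  haveI : ∀ r : {x // x ∈ C.level (C.rank p + 1)},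
      Finite (C.Hom p r.1 × ChainsTo C r.1 q n) := fun r => by
    haveI := hC.homFinite p r.1
    haveI := chainsTo_finite hC n r.1 q
    infer_instance
  rw [← Nat.card_congr (Equiv.ofBijective _
    ⟨prependFull_injective hC p q n, prependFull_surjective hC p q n⟩)]
  rw [natCard_sigma]
  rw [← Finset.sum_coe_sort (C.level (C.rank p + 1))
    (fun r => Nat.card (C.Hom p r) * Nat.card (ChainsTo C r q n))]
  exact Finset.sum_congr rfl fun r _ => Nat.card_prod _ _

/-! ### Operator computations -/

theorem autCard (hu : Unilateral C) (p : C.Obj) :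
    Nat.card (C.Hom p p) = 1 :=
  Nat.card_eq_one_iff_unique.2
    ⟨⟨fun f g => (hu p f).trans (hu p g).symm⟩, ⟨C.id p⟩⟩

theorem uQ_eq (hu : Unilateral C) (p q : C.Obj) :
    C.uQ p q = (Nat.card (C.Hom p q) : ℚ) := by
  rw [uQ, autCard hu, Nat.cast_one, div_one]

theorem dQ_eq (hu : Unilateral C) (p q : C.Obj) :
    C.dQ p q = (Nat.card (C.Hom p q) : ℚ) := by
  rw [dQ, autCard hu, Nat.cast_one, div_one]

theorem Uop_single (p : C.Obj) :
    C.Uop (Finsupp.single p 1) = C.Uvec p := by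
  rw [Uop, Finsupp.lsum_single, LinearMap.toSpanSingleton_apply, one_smul]

theorem Dop_single (q : C.Obj) :
    C.Dop (Finsupp.single q 1) = C.Dvec q := by
  rw [Dop, Finsupp.lsum_single, LinearMap.toSpanSingleton_apply, one_smul]

theorem Uop_apply (x : C.Vec) :
    C.Uop x = x.sum fun r c => c • C.Uvec r := by
  rw [Uop, Finsupp.lsum_apply]
  exact Finsupp.sum_congr fun r _ => LinearMap.toSpanSingleton_apply _ _ _ _

theorem Uvec_apply (p q : C.Obj) :
    (C.Uvec p) q = if q ∈ C.level (C.rank p + 1) then C.uQ p q else 0 := by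
  classical
  rw [Uvec, Finsupp.finset_sum_apply]
  simp only [Finsupp.smul_apply, Finsupp.single_apply, smul_eq_mul,
    mul_ite, mul_one, mul_zero]
  exact Finset.sum_ite_eq' _ _ _

theorem Uvec_support (hC : C.IsUpdownCat) (p : C.Obj) {r : C.Obj}
    (hr : r ∈ (C.Uvec p).support) : C.rank r = C.rank p + 1 := by
  by_contra h
  have : (C.Uvec p) r = 0 := by
    rw [Uvec_apply, if_neg]
    intro hm
    exact h ((hC.mem_level _ _).1 hm)
  exact (Finsupp.mem_support_iff.1 hr) this

theorem Uop_pow_support (hC : C.IsUpdownCat) :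
    ∀ (n : ℕ) (p : C.Obj), ∀ r ∈ ((C.Uop ^ n) (Finsupp.single p (1 : ℚ))).support,
      C.rank r = C.rank p + n := by
  classical
  intro n
  induction n with
  | zero =>
    intro p r hr
    rw [pow_zero, Module.End.one_apply] at hr
    have := Finsupp.support_single_subset hr
    simp only [Finset.mem_singleton] at this
    subst this; simp
  | succ n ih =>
    intro p r hr
    rw [pow_succ', Module.End.mul_apply, Uop_apply, Finsupp.sum] at hr
    obtain ⟨s, hs, hrs⟩ := Finset.mem_biUnion.1 (Finsupp.support_finset_sum hr)
    have hs' := ih p s hs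
    have hrs' : r ∈ (C.Uvec s).support := Finsupp.support_smul hrs
    rw [Uvec_support hC s hrs', hs']
    omega

theorem coeff_U (hC : C.IsUpdownCat) (hu : Unilateral C) :
    ∀ (n : ℕ) (p q : C.Obj), C.rank q = C.rank p + n →
      ((C.Uop ^ n) (Finsupp.single p 1)) q = (Nat.card (ChainsTo C p q n) : ℚ) := by
  intro n
  induction n with
  | zero =>
    intro p q _
    rw [pow_zero, Module.End.one_apply, Finsupp.single_apply, card_chains_zero]
    split_ifs <;> simp
  | succ n ih =>
    intro p q h
    rw [pow_succ, Module.End.mul_apply, Uop_single, Uvec, map_sum,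
      Finsupp.finset_sum_apply, card_chains_succ hC]
    push_cast
    refine Finset.sum_congr rfl fun r hr => ?_
    have hrk : C.rank r = C.rank p + 1 := (hC.mem_level _ _).1 hr
    rw [map_smul, Finsupp.smul_apply, smul_eq_mul, uQ_eq hu, ih r q (by omega)]

theorem coeff_D_eq_U (hC : C.IsUpdownCat) (hu : Unilateral C) :
    ∀ (n : ℕ) (p q : C.Obj), C.rank q = C.rank p + n →
      ((C.Dop ^ n) (Finsupp.single q 1)) p
        = ((C.Uop ^ n) (Finsupp.single p 1)) q := by
  intro n
  induction n with
  | zero =>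
    intro p q _
    rw [pow_zero, Module.End.one_apply, pow_zero, Module.End.one_apply,
      Finsupp.single_apply, Finsupp.single_apply]
    rcases eq_or_ne p q with h | h
    · subst h; rfl
    · rw [if_neg h, if_neg (Ne.symm h)]
  | succ n ih =>
    intro p q h
    have hq0 : C.rank q ≠ 0 := by omega
    have hlev : C.rank q - 1 = C.rank p + n := by omega
    rw [pow_succ, Module.End.mul_apply, Dop_single]
    have hD : C.Dvec q
        = ∑ r ∈ C.level (C.rank p + n), C.dQ r q • Finsupp.single r 1 := by
      rw [Dvec, if_neg hq0, hlev]
    rw [hD, map_sum, Finsupp.finset_sum_apply]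
    rw [pow_succ', Module.End.mul_apply, Uop_apply, Finsupp.sum,
      Finsupp.finset_sum_apply]
    rw [Finset.sum_subset
      (fun r hr => (hC.mem_level _ _).2 (Uop_pow_support hC n p r hr))
      (fun r _ hr => by
        rw [Finsupp.smul_apply, Finsupp.notMem_support_iff.1 hr, zero_smul])]
    refine Finset.sum_congr rfl fun r hr => ?_
    have hrk : C.rank r = C.rank p + n := (hC.mem_level _ _).1 hr
    rw [map_smul, Finsupp.smul_apply, Finsupp.smul_apply, smul_eq_mul,
      smul_eq_mul, Uvec_apply, if_pos ((hC.mem_level _ _).2 (by omega)),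
      ih p r (by omega), dQ_eq hu, uQ_eq hu, mul_comm]

end UpdownData

open UpdownData in
/-- in a unilateral updown category, for `|q| - |p| = n > 0`, the
multiplicity `u(p;q) = d(p;q)` equals the number of chains of morphisms
between adjacent ranks from `p` to `q`. -/
theorem updown_unilateral_uext_eq_card_chains (C : UpdownData)
    (hC : C.IsUpdownCat) (hu : Unilateral C) (p q : C.Obj) (n : ℕ)
    (hn : 0 < n) (hr : C.rank q = C.rank p + n) :
    C.uext p q = C.dext p q ∧
    C.uext p q =
      (Nat.card {ch : UDChainFrom C p n // ch.obj (Fin.last n) = q} : ℚ) := by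
  have hd : C.rank q - C.rank p = n := by omega
  constructor
  · rw [UpdownData.uext, UpdownData.dext, hd]
    exact (coeff_D_eq_U hC hu n p q hr).symm
  · rw [UpdownData.uext, hd]
    exact coeff_U hC hu n p q hr
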